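/- arXiv:2206.06052 — 2 statements merged into one kernel-verified Lean document; each statement's English description precedes it below -/
import Mathlib

section
/- Let G be a finite simple graph containing distinct vertices v₁, v₂, v₃, v₄ such that v₁ and v₃ both have degree 2 and both have exactly {v₂, v₄} as their set of neighbors (so v₁v₂v₃v₄ is a 4-cycle whose vertices v₁ and v₃ have degree 2 in G). If the graph G − v₁ obtained by deleting v₁ has an odd 7-coloring, then G has an odd 7-coloring. -/
/-- A coloring `c` is an odd coloring of `G`: it is proper, and every
non-isolated vertex has some color appearing an odd number of times in its
neighborhood. -/
def IsOddColoring {V α : Type*} (G : SimpleGraph V) (c : V → α) : Prop :=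
  (∀ u v, G.Adj u v → c u ≠ c v) ∧
  ∀ v, (G.neighborSet v).Nonempty → ∃ a : α, Odd {w | G.Adj v w ∧ c w = a}.ncard

/-- `G` has an odd coloring using at most `k` colors. -/
def HasOddColoring {V : Type*} (G : SimpleGraph V) (k : ℕ) : Prop :=
  ∃ c : V → Fin k, IsOddColoring G c

/-
Since `v₁` and `v₃` have the same neighbourhood `{v₂, v₄}` and are not adjacent, the colours
around `v₁` in `G` are those around `v₃` in `G - v₁`, so an odd colour at `v₃` is one at `v₁`.
Giving `v₁` a colour different from the colours of `v₂, v₄` and from one odd colour at each of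
`v₂, v₄` in `G - v₁` excludes at most `4 < 7` colours, keeps the colouring proper and leaves
those odd colours odd, while no other vertex sees `v₁`.
-/

section

variable {V α : Type*} {G : SimpleGraph V} {v : V}

open Classical in
noncomputable def extendAt (v : V) (c : ({v}ᶜ : Set V) → α) (b : α) (x : V) : α :=
  if hx : x = v then b else c ⟨x, hx⟩

@[simp]
lemma extendAt_self (c : ({v}ᶜ : Set V) → α) (b : α) : extendAt v c b v = b := by
  simp [extendAt]

@[simp]
lemma extendAt_coe (c : ({v}ᶜ : Set V) → α) (b : α) (x : ({v}ᶜ : Set V)) :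
    extendAt v c b x = c x := by
  rw [extendAt, dif_neg (show (x : V) ≠ v from x.2)]

lemma ncard_adj_extendAt_eq {c : ({v}ᶜ : Set V) → α} {b a : α} (x : ({v}ᶜ : Set V))
    (hxv : G.Adj x v → b ≠ a) :
    {y | G.Adj x y ∧ extendAt v c b y = a}.ncard =
      {y | (G.induce {v}ᶜ).Adj x y ∧ c y = a}.ncard := by
  rw [← Set.ncard_image_of_injective _ Subtype.val_injective]
  congr 1
  ext y
  rcases eq_or_ne y v with rfl | hy
  · simpa using hxv
  · lift y to ({v}ᶜ : Set V) using hy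
    simp [show (y : V) ≠ v from y.2]

theorem IsOddColoring.extendAt {c : ({v}ᶜ : Set V) → α}
    (hc : IsOddColoring (G.induce {v}ᶜ) c) {w : V} (hvw : v ≠ w)
    (htwin : G.neighborSet v = G.neighborSet w) {b : α}
    (hb : ∀ u : ({v}ᶜ : Set V), G.Adj v u →
      c u ≠ b ∧ ∃ a ≠ b, Odd {y | (G.induce {v}ᶜ).Adj u y ∧ c y = a}.ncard) :
    IsOddColoring G (extendAt v c b) := by
  have hadj_iff (y : V) : G.Adj v y ↔ G.Adj w y := by
    simpa using Set.ext_iff.mp htwin y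
  have hwv : ¬ G.Adj w v := fun h => G.irrefl ((hadj_iff v).2 h)
  refine ⟨fun x y hxy => ?_, fun x hx => ?_⟩
  · rcases eq_or_ne x v with rfl | hx
    · have hy : y ≠ x := G.ne_of_adj hxy.symm
      lift y to ({x}ᶜ : Set V) using hy
      simpa using (hb y hxy).1.symm
    rcases eq_or_ne y v with rfl | hy
    · lift x to ({y}ᶜ : Set V) using hx
      simpa using (hb x hxy.symm).1
    lift x to ({v}ᶜ : Set V) using hx
    lift y to ({v}ᶜ : Set V) using hy
    simpa using hc.1 x y hxy
  rcases eq_or_ne x v with rfl | hxv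
  · obtain ⟨y, hy⟩ := hx
    lift w to ({x}ᶜ : Set V) using hvw.symm
    have hyx : y ≠ x := G.ne_of_adj hy.symm
    obtain ⟨a, ha⟩ := hc.2 w ⟨⟨y, hyx⟩, (hadj_iff y).1 hy⟩
    refine ⟨a, ?_⟩
    simp_rw [hadj_iff]
    rwa [ncard_adj_extendAt_eq w fun h => absurd h hwv]
  lift x to ({v}ᶜ : Set V) using hxv
  by_cases hxv : G.Adj x v
  · obtain ⟨-, a, hab, ha⟩ := hb x hxv.symm
    exact ⟨a, by rwa [ncard_adj_extendAt_eq x fun _ => hab.symm]⟩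
  · obtain ⟨y, hy⟩ := hx
    have hyv : y ≠ v := by rintro rfl; exact hxv hy
    obtain ⟨a, ha⟩ := hc.2 x ⟨⟨y, hyv⟩, hy⟩
    exact ⟨a, by rwa [ncard_adj_extendAt_eq x fun h => absurd h hxv]⟩

lemma exists_forall_ne_of_two_mul_ncard_lt {β γ : Type*} [Finite γ] {s : Set β} (hs : s.Finite)
    (f g : β → γ) (hs_card : 2 * s.ncard < Nat.card γ) :
    ∃ b, ∀ x ∈ s, f x ≠ b ∧ g x ≠ b := by
  have hcard : (f '' s ∪ g '' s).ncard < (Set.univ : Set γ).ncard :=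
    calc (f '' s ∪ g '' s).ncard ≤ (f '' s).ncard + (g '' s).ncard := Set.ncard_union_le _ _
      _ ≤ s.ncard + s.ncard := add_le_add (Set.ncard_image_le hs) (Set.ncard_image_le hs)
      _ < (Set.univ : Set γ).ncard := by rwa [← two_mul, Set.ncard_univ]
  obtain ⟨b, hb⟩ := (Set.ne_univ_iff_exists_notMem _).1 fun h => hcard.ne (congrArg Set.ncard h)
  exact ⟨b, fun x hx => ⟨fun h => hb (Or.inl ⟨x, hx, h⟩), fun h => hb (Or.inr ⟨x, hx, h⟩)⟩⟩

theorem HasOddColoring.of_induce_compl_of_neighborSet_eq {w : V} {k : ℕ}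
    (hvw : v ≠ w) (htwin : G.neighborSet v = G.neighborSet w) (hfin : (G.neighborSet v).Finite)
    (hk : 2 * (G.neighborSet v).ncard < k) (h : HasOddColoring (G.induce {v}ᶜ) k) :
    HasOddColoring G k := by
  obtain ⟨c, hc⟩ := h
  have : NeZero k := ⟨by omega⟩
  have hodd (u : ({v}ᶜ : Set V)) (hu : G.Adj v u) :
      ∃ a, Odd {y | (G.induce {v}ᶜ).Adj u y ∧ c y = a}.ncard :=
    hc.2 u ⟨⟨w, hvw.symm⟩, G.adj_symm (show (u : V) ∈ G.neighborSet w from htwin ▸ hu)⟩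
  choose! a ha using hodd
  have hs : (Subtype.val ⁻¹' G.neighborSet v : Set ({v}ᶜ : Set V)).ncard =
      (G.neighborSet v).ncard :=
    Set.ncard_preimage_of_injective_subset_range Subtype.val_injective
      fun u hu => ⟨⟨u, (G.ne_of_adj hu).symm⟩, rfl⟩
  obtain ⟨b, hb⟩ := exists_forall_ne_of_two_mul_ncard_lt
    (hfin.preimage Subtype.val_injective.injOn) c a (by rwa [hs, Nat.card_fin])
  exact ⟨_, hc.extendAt hvw htwin fun u hu => ⟨(hb u hu).1, a u, (hb u hu).2, ha u hu⟩⟩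

end

theorem hasOddColoring_of_delete_four_cycle_vertex_general {V : Type*}
    (G : SimpleGraph V) (v₁ v₂ v₃ v₄ : V)
    (h13 : v₁ ≠ v₃)
    (hN1 : G.neighborSet v₁ = {v₂, v₄}) (hN3 : G.neighborSet v₃ = {v₂, v₄})
    (h : HasOddColoring (G.induce ({v₁}ᶜ : Set V)) 7) :
    HasOddColoring G 7 := by
  refine h.of_induce_compl_of_neighborSet_eq h13 (hN1.trans hN3.symm) ?_ ?_ <;> rw [hN1]
  · exact (Set.finite_singleton v₄).insert v₂
  · have := Set.ncard_insert_le v₂ {v₄}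
    rw [Set.ncard_singleton] at this
    omega

/-- Suppose `v₁ v₂ v₃ v₄` is a 4-cycle in `G` where `v₁` and `v₃` have degree 2
(their neighborhoods are exactly `{v₂, v₄}`).  If `G - v₁` has an odd 7-coloring,
then so does `G`. -/
theorem hasOddColoring_of_delete_four_cycle_vertex {V : Type*} [Fintype V]
    (G : SimpleGraph V) (v₁ v₂ v₃ v₄ : V)
    (h12 : v₁ ≠ v₂) (h13 : v₁ ≠ v₃) (h14 : v₁ ≠ v₄)
    (h23 : v₂ ≠ v₃) (h24 : v₂ ≠ v₄) (h34 : v₃ ≠ v₄)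
    (hN1 : G.neighborSet v₁ = {v₂, v₄}) (hN3 : G.neighborSet v₃ = {v₂, v₄})
    (h : HasOddColoring (G.induce ({v₁}ᶜ : Set V)) 7) :
    HasOddColoring G 7 :=
  hasOddColoring_of_delete_four_cycle_vertex_general G v₁ v₂ v₃ v₄ h13 hN1 hN3 h
end

section
/- Let G be a finite simple graph and let v be a vertex of odd degree in G such that d(v) + e(v) ≤ 6, where d(v) is the degree of v and e(v) is the number of neighbors of v whose degree in G is even. If the graph G − v obtained by deleting v has an odd 7-coloring, then G has an odd 7-coloring. -/
/-!
Give `v` a color different from the colors of its neighbours and, for each neighbour `w` of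
even degree, from one color that occurs an odd number of times around `w` in `G - v`: this
excludes at most `d(v) + e(v) ≤ 6` of the 7 colors. Every vertex of odd degree, `v` included,
has a color occurring an odd number of times around it under any coloring, by parity. Any
other vertex keeps its odd color class from `G - v`, since `v` either is not its neighbour or
has a color other than that class.
-/

section

variable {V α : Type*}

theorem exists_odd_ncard_fiber {N : Set V} (hN : Odd N.ncard) (c : V → α) :
    ∃ a, Odd {w ∈ N | c w = a}.ncard := by
  classical
  have hfin : N.Finite := Set.finite_of_ncard_pos hN.pos
  by_contra! hall
  simp only [Nat.not_odd_iff_even] at hall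
  refine Nat.not_even_iff_odd.mpr hN ?_
  rw [Set.ncard_eq_toFinset_card N hfin, Finset.card_eq_sum_card_image c]
  refine Finset.even_sum _ fun a _ => ?_
  have hfiber : (({w ∈ hfin.toFinset | c w = a} : Finset V) : Set V) = {w ∈ N | c w = a} := by
    ext w
    simp
  rw [← Set.ncard_coe_finset, hfiber]
  exact hall a

variable {G : SimpleGraph V}

theorem exists_odd_color_of_odd_degree {u : V} (hu : Odd (G.neighborSet u).ncard)
    (c : V → α) : ∃ a, Odd {w | G.Adj u w ∧ c w = a}.ncard :=
  exists_odd_ncard_fiber hu c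

theorem exists_adj_ne_of_even_degree {v w : V} (hvw : G.Adj v w)
    (hw : Even (G.neighborSet w).ncard) : ∃ x, G.Adj w x ∧ x ≠ v := by
  by_contra! h
  have : G.neighborSet w = {v} :=
    Set.eq_singleton_iff_unique_mem.mpr ⟨hvw.symm, fun x hx => h x hx⟩
  rw [this, Set.ncard_singleton] at hw
  exact Nat.not_even_one hw

theorem ncard_fiber_induce_compl_singleton {v : V} (c : V → α) (u : ({v}ᶜ : Set V))
    {b : α} (hb : G.Adj u v → c v ≠ b) :
    {x | (G.induce {v}ᶜ).Adj u x ∧ c x = b}.ncard = {w | G.Adj u w ∧ c w = b}.ncard := by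
  rw [← Set.ncard_image_of_injective _ Subtype.val_injective]
  congr 1
  ext w
  constructor
  · rintro ⟨x, hx, rfl⟩
    exact hx
  · rintro ⟨huw, rfl⟩
    have hwv : w ≠ v := by
      rintro rfl
      exact hb huw rfl
    exact ⟨⟨w, hwv⟩, ⟨huw, rfl⟩, rfl⟩

def IsSafeColor (G : SimpleGraph V) (v : V) (c : V → α) (a : α) : Prop :=
  (∀ w, G.Adj v w → c w ≠ a) ∧
  ∀ w : ({v}ᶜ : Set V), G.Adj v w → Even (G.neighborSet w).ncard →
    ∃ b ≠ a, Odd {x | (G.induce {v}ᶜ).Adj w x ∧ c x = b}.ncard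

theorem exists_isSafeColor [Finite α] {v : V} {c : V → α}
    (h₀ : IsOddColoring (G.induce {v}ᶜ) (c ∘ (↑))) (hv : (G.neighborSet v).Finite)
    (hcard : (G.neighborSet v).ncard
        + {w | G.Adj v w ∧ Even (G.neighborSet w).ncard}.ncard < Nat.card α) :
    ∃ a, IsSafeColor G v c a := by
  set E := {w | G.Adj v w ∧ Even (G.neighborSet w).ncard}
  have hoddColor : ∀ w, ∃ b, ∀ hw : w ≠ v, w ∈ E →
      Odd {x | (G.induce {v}ᶜ).Adj ⟨w, hw⟩ x ∧ c x = b}.ncard := by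
    intro w
    by_cases hw : w ∈ E
    · obtain ⟨x, hwx, hxv⟩ := exists_adj_ne_of_even_degree hw.1 hw.2
      obtain ⟨b, hb⟩ := h₀.2 ⟨w, (G.ne_of_adj hw.1).symm⟩ ⟨⟨x, hxv⟩, hwx⟩
      exact ⟨b, fun _ _ => hb⟩
    · exact ⟨c v, fun _ hw' => absurd hw' hw⟩
  choose bad hbad using hoddColor
  set F := c '' G.neighborSet v ∪ bad '' E
  have hF : F.ncard < Nat.card α :=
    calc F.ncard ≤ (c '' G.neighborSet v).ncard + (bad '' E).ncard := Set.ncard_union_le _ _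
      _ ≤ (G.neighborSet v).ncard + E.ncard :=
        add_le_add (Set.ncard_image_le hv) (Set.ncard_image_le (hv.subset fun _ hw => hw.1))
      _ < Nat.card α := hcard
  obtain ⟨a, ha⟩ := (Set.ne_univ_iff_exists_notMem F).mp fun h => by simp [h] at hF
  exact ⟨a, fun w hvw hwa => ha (Or.inl ⟨w, hvw, hwa⟩),
    fun w hvw hw => ⟨bad w, fun hba => ha (Or.inr ⟨w, ⟨hvw, hw⟩, hba⟩), hbad w w.2 ⟨hvw, hw⟩⟩⟩

theorem IsSafeColor.isOddColoring_update [DecidableEq V] {v : V} {c : V → α} {a : α}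
    (ha : IsSafeColor G v c a) (h₀ : IsOddColoring (G.induce {v}ᶜ) (c ∘ (↑)))
    (hv : Odd (G.neighborSet v).ncard) : IsOddColoring G (Function.update c v a) := by
  set c' := Function.update c v a
  have hc'v : c' v = a := Function.update_self v a c
  have hc' : ∀ w, w ≠ v → c' w = c w := fun w hw => Function.update_of_ne hw a c
  refine ⟨fun u w huw => ?_, fun u hu => ?_⟩
  · by_cases hu : u = v
    · subst hu
      rw [hc'v, hc' w (G.ne_of_adj huw).symm]
      exact (ha.1 w huw).symm
    by_cases hw : w = v
    · subst hw
      rw [hc'v, hc' u hu]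
      exact ha.1 u huw.symm
    rw [hc' u hu, hc' w hw]
    exact h₀.1 ⟨u, hu⟩ ⟨w, hw⟩ huw
  by_cases huv : u = v
  · subst huv
    exact exists_odd_color_of_odd_degree hv c'
  rcases Nat.even_or_odd (G.neighborSet u).ncard with heven | hodd
  · obtain ⟨b, hab, hb⟩ : ∃ b, (G.Adj u v → a ≠ b) ∧
        Odd {x | (G.induce {v}ᶜ).Adj ⟨u, huv⟩ x ∧ c x = b}.ncard := by
      by_cases hadj : G.Adj u v
      · obtain ⟨b, hba, hb⟩ := ha.2 ⟨u, huv⟩ hadj.symm heven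
        exact ⟨b, fun _ => hba.symm, hb⟩
      · obtain ⟨x, hx⟩ := hu
        obtain ⟨b, hb⟩ := h₀.2 ⟨u, huv⟩ ⟨⟨x, fun hxv => hadj (hxv ▸ hx)⟩, hx⟩
        exact ⟨b, fun h => absurd h hadj, hb⟩
    refine ⟨b, ?_⟩
    rw [← ncard_fiber_induce_compl_singleton c' ⟨u, huv⟩ (by rwa [hc'v])]
    simpa only [fun x : ({v}ᶜ : Set V) => hc' x x.2] using hb
  · exact exists_odd_color_of_odd_degree hodd c'

end

theorem hasOddColoring_of_delete_odd_vertex_general {V : Type*}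
    (G : SimpleGraph V) (v : V) (hodd : Odd (G.neighborSet v).ncard)
    (hle : (G.neighborSet v).ncard
        + {w | G.Adj v w ∧ Even (G.neighborSet w).ncard}.ncard ≤ 6)
    (h : HasOddColoring (G.induce ({v}ᶜ : Set V)) 7) :
    HasOddColoring G 7 := by
  classical
  obtain ⟨c₀, hc₀⟩ := h
  obtain ⟨c, rfl⟩ := Subtype.val_injective.surjective_comp_right c₀
  obtain ⟨a, ha⟩ := exists_isSafeColor hc₀ (Set.finite_of_ncard_pos hodd.pos)
    (by rw [Nat.card_fin]; omega)
  exact ⟨_, ha.isOddColoring_update hc₀ hodd⟩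

/-- If `v` has odd degree and `d(v) + e(v) ≤ 6`, where `e(v)` is the number of
neighbors of `v` of even degree, and `G - v` has an odd 7-coloring, then so does
`G`. -/
theorem hasOddColoring_of_delete_odd_vertex {V : Type*} [Fintype V]
    (G : SimpleGraph V) (v : V) (hodd : Odd (G.neighborSet v).ncard)
    (hle : (G.neighborSet v).ncard
        + {w | G.Adj v w ∧ Even (G.neighborSet w).ncard}.ncard ≤ 6)
    (h : HasOddColoring (G.induce ({v}ᶜ : Set V)) 7) :
    HasOddColoring G 7 :=
  hasOddColoring_of_delete_odd_vertex_general G v hodd hle h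
end
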